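/- Let f : Σ* → ℤ with finite image, let H = {g : Σ* → ℤ | g = 0} so that u ≼ v iff f·u = f·v (equal residuals), and suppose f factors through a homomorphism into a finite aperiodic monoid (f is 'star-free recognizable'). Then for all u, w ∈ Σ*: if f·u = f·(u w^n) for some n ≥ 1, then f·u = f·(u w). -/

import Mathlib

/-!
Iterating the hypothesis, `u` has the same residual as `u w^(kn)` for every `k`. Choosing `N` with
`(h w)^N = (h w)^(N+1)`, the power `(h w)^(Nn)` absorbs one more factor `h w`, so `u w^(Nn) x` and
`u w^(Nn) w x` have the same image in `M`; their values under `f` are those of `u x` and `u w x`.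
-/

section WordHom

variable {A M : Type*} [Monoid M] {h : List A → M}

theorem map_flatten_eq_prod (hone : h [] = 1) (hmul : ∀ x y : List A, h (x ++ y) = h x * h y)
    (L : List (List A)) : h L.flatten = (L.map h).prod := by
  induction L with
  | nil => exact hone
  | cons v L ih => rw [List.flatten_cons, hmul, ih, List.map_cons, List.prod_cons]

theorem map_flatten_replicate (hone : h [] = 1) (hmul : ∀ x y : List A, h (x ++ y) = h x * h y)
    (k : ℕ) (v : List A) : h (List.replicate k v).flatten = h v ^ k := by
  rw [map_flatten_eq_prod hone hmul, List.map_replicate, List.prod_replicate]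

end WordHom

theorem pow_mul_self_of_pow_eq_pow_succ {M : Type*} [Monoid M] {m : M} {N k : ℕ}
    (hN : m ^ N = m ^ (N + 1)) (hk : N ≤ k) : m ^ k * m = m ^ k := by
  induction k, hk using Nat.le_induction with
  | base => rw [← pow_succ, ← hN]
  | succ k _ ih => rw [pow_succ, ih, ih]

theorem residual_eq_flatten_replicate {A β : Type*} {F : List A → β} {u v : List A}
    (hres : ∀ x, F (u ++ x) = F (u ++ v ++ x)) (k : ℕ) (x : List A) :
    F (u ++ x) = F (u ++ (List.replicate k v).flatten ++ x) := by
  induction k generalizing x with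
  | zero => simp
  | succ k ih =>
    rw [ih, List.append_assoc u, hres]
    simp only [List.replicate_succ, List.flatten_cons, List.append_assoc]

theorem star_free_residual_counter_free_general {A M : Type*}
    [Monoid M]
    (f : List A → ℤ)
    (h : List A → M) (g : M → ℤ)
    (hone : h [] = 1) (hmul : ∀ x y : List A, h (x ++ y) = h x * h y)
    (hfact : ∀ w : List A, f w = g (h w))
    (haper : ∀ m : M, ∃ N : ℕ, m ^ N = m ^ (N + 1))
    (u w : List A) (n : ℕ) (hn : 1 ≤ n)
    (hres : ∀ x : List A, f (u ++ x) = f ((u ++ List.flatten (List.replicate n w)) ++ x)) :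
    ∀ x : List A, f (u ++ x) = f ((u ++ w) ++ x) := by
  intro x
  obtain ⟨N, hN⟩ := haper (h w)
  set V := (List.replicate N (List.replicate n w).flatten).flatten
  have hV : h V = h w ^ (n * N) := by
    rw [map_flatten_replicate hone hmul, map_flatten_replicate hone hmul, pow_mul]
  have habsorb : h V * h w = h V :=
    hV ▸ pow_mul_self_of_pow_eq_pow_succ hN (Nat.le_mul_of_pos_left N hn)
  calc f (u ++ x)
      = f (u ++ V ++ x) := residual_eq_flatten_replicate hres N x
    _ = f (u ++ V ++ (w ++ x)) := by
        simp only [hfact, hmul, mul_assoc, ← mul_assoc (h V), habsorb]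
    _ = f (u ++ w ++ x) := by
        rw [← residual_eq_flatten_replicate hres N, List.append_assoc]

theorem star_free_residual_counter_free {A M : Type*} [Fintype A]
    [Monoid M] [Fintype M]
    (f : List A → ℤ) (hfin : (Set.range f).Finite)
    (h : List A → M) (g : M → ℤ)
    (hone : h [] = 1) (hmul : ∀ x y : List A, h (x ++ y) = h x * h y)
    (hfact : ∀ w : List A, f w = g (h w))
    (haper : ∀ m : M, ∃ N : ℕ, m ^ N = m ^ (N + 1))
    (u w : List A) (n : ℕ) (hn : 1 ≤ n)
    (hres : ∀ x : List A, f (u ++ x) = f ((u ++ List.flatten (List.replicate n w)) ++ x)) :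
    ∀ x : List A, f (u ++ x) = f ((u ++ w) ++ x) :=
  star_free_residual_counter_free_general f h g hone hmul hfact haper u w n hn hres
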